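/- arXiv:1509.00932 — 3 statements merged into one kernel-verified Lean document; each statement's English description precedes it below -/
import Mathlib

section
/- For complex numbers α, β with α ≠ 1 and β ≠ 1, the equation (2α−1)(α−2)(β−1)² = (2β−1)(β−2)(α−1)² holds if and only if α = β or αβ = 1. -/
theorem stmt_1 (α β : ℂ) (hα : α ≠ 1) (hβ : β ≠ 1) :
    (2*α - 1) * (α - 2) * (β - 1)^2 = (2*β - 1) * (β - 2) * (α - 1)^2 ↔
      α = β ∨ α * β = 1 := by
  constructor
  · intro h
    have h2 : (α - β) * (α * β - 1) = 0 := by linear_combination h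
    rcases mul_eq_zero.mp h2 with h | h
    · left; exact sub_eq_zero.mp h
    · right; exact sub_eq_zero.mp h
  · rintro (rfl | h)
    · ring
    · linear_combination (α - β) * h
end

section
/- There is no matrix A ∈ SL(3,ℂ) such that A⁻¹·span{E₁₂, E₃₂}·A = span{E₂₃, E₂₁}, where the spans are taken as subspaces of the 3×3 complex matrices. -/
/-!
If `A⁻¹ E_{k1} A` lies in `span {E₁₂, E₁₀}` for `k = 0, 2`, then, being the outer product of
column `k` of `A⁻¹` with the nonzero row `1` of `A`, it forces columns `0` and `2` of `A⁻¹` to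
vanish outside row `1`. Two such columns are proportional, so `det A⁻¹ = 0`, contradicting
`A ∈ SL₃`.
-/

open Matrix

namespace Matrix

variable {l m n o R : Type*}

theorem mul_single_mul_apply [Fintype m] [Fintype n] [DecidableEq m] [DecidableEq n]
    [NonUnitalNonAssocSemiring R] (B : Matrix l m R) (A : Matrix n o R)
    (k : m) (k' : n) (c : R) (i : l) (j : o) :
    (B * single k k' c * A) i j = B i k * c * A k' j := by
  simp [mul_apply, single, ite_and]

theorem apply_eq_zero_of_mem_span_single_pair [DecidableEq m] [DecidableEq n] [Semiring R]
    {X : Matrix m n R} {r i : m} {j j' : n} {a b : R}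
    (hX : X ∈ Submodule.span R {single r j a, single r j' b}) (hi : i ≠ r) (k : n) :
    X i k = 0 := by
  obtain ⟨c, d, rfl⟩ := Submodule.mem_span_pair.1 hX
  simp [single_apply_of_row_ne hi.symm]

theorem exists_apply_ne_zero_of_det_ne_zero [Fintype n] [DecidableEq n] [CommRing R]
    {A : Matrix n n R} (hA : A.det ≠ 0) (i : n) : ∃ j, A i j ≠ 0 := by
  by_contra! h
  exact hA (det_eq_zero_of_row_eq_zero i h)

theorem det_eq_zero_of_cols_eq_zero_off_row [Fintype n] [DecidableEq n] [CommRing R] [IsDomain R]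
    {B : Matrix n n R} {r k k' : n} (hk : k ≠ k') (hB : ∀ i ≠ r, B i k = 0)
    (hB' : ∀ i ≠ r, B i k' = 0) : B.det = 0 := by
  by_cases hrk : B r k = 0
  · exact det_eq_zero_of_column_eq_zero k fun i ↦ by
      rcases eq_or_ne i r with rfl | hi
      exacts [hrk, hB i hi]
  -- both columns are multiples of `e_r`, so `B r k' • e_k - B r k • e_k'` is a kernel vector
  refine exists_mulVec_eq_zero_iff.1 ⟨B r k' • Pi.single k 1 - B r k • Pi.single k' 1, ?_, ?_⟩
  · intro h
    have := congrFun h k'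
    simp [hk, hrk] at this
  · ext i
    rcases eq_or_ne i r with rfl | hi
    · simp [mulVec_sub, mulVec_smul, mul_comm]
    · simp [mulVec_sub, mulVec_smul, hB i hi, hB' i hi]

end Matrix

theorem stmt_7 :
    ¬ ∃ A : Matrix.SpecialLinearGroup (Fin 3) ℂ,
      (fun X : Matrix (Fin 3) (Fin 3) ℂ =>
          (↑(A⁻¹) : Matrix (Fin 3) (Fin 3) ℂ) * X * (↑A : Matrix (Fin 3) (Fin 3) ℂ)) ''
          ((Submodule.span ℂ
              ({Matrix.single 0 1 (1 : ℂ), Matrix.single 2 1 (1 : ℂ)} :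
                Set (Matrix (Fin 3) (Fin 3) ℂ))) :
            Set (Matrix (Fin 3) (Fin 3) ℂ)) =
        ((Submodule.span ℂ
            ({Matrix.single 1 2 (1 : ℂ), Matrix.single 1 0 (1 : ℂ)} :
              Set (Matrix (Fin 3) (Fin 3) ℂ))) :
          Set (Matrix (Fin 3) (Fin 3) ℂ)) := by
  rintro ⟨A, hA⟩
  obtain ⟨j, hj⟩ := exists_apply_ne_zero_of_det_ne_zero (A.det_coe.symm ▸ one_ne_zero) 1
  have hcol : ∀ k ∈ ({0, 2} : Set (Fin 3)), ∀ i ≠ 1, (↑A⁻¹ : Matrix (Fin 3) (Fin 3) ℂ) i k = 0 := by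
    intro k hk i hi
    have hmem : (↑A⁻¹ : Matrix (Fin 3) (Fin 3) ℂ) * single k 1 1 * (A : Matrix (Fin 3) (Fin 3) ℂ) ∈
        Submodule.span ℂ {single 1 2 (1 : ℂ), single 1 0 1} := by
      rw [← SetLike.mem_coe, ← hA]
      refine ⟨_, Submodule.subset_span ?_, rfl⟩
      rcases hk with rfl | rfl <;> simp
    have hentry := apply_eq_zero_of_mem_span_single_pair hmem hi j
    rw [mul_single_mul_apply, mul_one] at hentry
    exact (mul_eq_zero.1 hentry).resolve_right hj
  have hdet := det_eq_zero_of_cols_eq_zero_off_row (by decide : (0 : Fin 3) ≠ 2)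
    (hcol 0 (by simp)) (hcol 2 (by simp))
  exact one_ne_zero ((A⁻¹).det_coe ▸ hdet)
end

section
/- Let M_{13,a} be the 4-dimensional Lie algebra with basis z₁,z₂,z₃,z₄ and nonzero brackets [z₄,z₁]=z₁+a z₃, [z₄,z₂]=z₂, [z₄,z₃]=z₁, [z₃,z₁]=z₂. For α ∈ ℂ with α ≠ ±1, the Lie algebra M^{1,α} := span{E₁₂, E₂₃, −E₁₃, diag(α, 1−α, −1)} ⊂ sl(3,ℂ) is isomorphic as a Lie algebra to M_{13, (2α−1)(α−2)/(α+1)²}. -/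
open Matrix

set_option maxHeartbeats 2000000 in
theorem stmt_15 (α : ℂ) (h1 : α ≠ 1) (h2 : α ≠ -1) :
    let a : ℂ := (2*α - 1) * (α - 2) / (α + 1)^2
    let e12 : Matrix (Fin 3) (Fin 3) ℂ := Matrix.single 0 1 1
    let e23 : Matrix (Fin 3) (Fin 3) ℂ := Matrix.single 1 2 1
    let e13 : Matrix (Fin 3) (Fin 3) ℂ := Matrix.single 0 2 1
    let w1 : Matrix (Fin 3) (Fin 3) ℂ := (α + 1)⁻¹ • ((2*α - 1) • e12 - (α - 2) • e23)
    let w2 : Matrix (Fin 3) (Fin 3) ℂ := (-(3*(α - 1)) / (α + 1)) • e13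
    let w3 : Matrix (Fin 3) (Fin 3) ℂ := e12 + e23
    let w4 : Matrix (Fin 3) (Fin 3) ℂ := (α + 1)⁻¹ • diagonal ![α, 1 - α, -1]
    (⁅w4, w1⁆ = w1 + a • w3) ∧ (⁅w4, w2⁆ = w2) ∧ (⁅w4, w3⁆ = w1) ∧
    (⁅w3, w1⁆ = w2) ∧ (⁅w1, w2⁆ = 0) ∧ (⁅w3, w2⁆ = 0) ∧
    LinearIndependent ℂ ![w1, w2, w3, w4] ∧
    Submodule.span ℂ {w1, w2, w3, w4} =
      Submodule.span ℂ {e12, e23, -e13, diagonal ![α, 1 - α, -1]} := by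
  intro a e12 e23 e13 w1 w2 w3 w4
  have hα1 : α + 1 ≠ 0 := fun h => h2 (by linear_combination h)
  have hα3 : (3:ℂ)*(α-1) ≠ 0 := fun h => h1 (by linear_combination h/3)
  set d : Matrix (Fin 3) (Fin 3) ℂ := diagonal ![α, 1 - α, -1] with hd
  refine ⟨?_, ?_, ?_, ?_, ?_, ?_, ?_, ?_⟩
  · -- ⁅w4, w1⁆ = w1 + a • w3
    simp only [a, w1, w3, w4, e12, e23, hd, Ring.lie_def]
    ext i j
    fin_cases i <;> fin_cases j <;>
      simp [Matrix.mul_apply, Fin.sum_univ_succ, Matrix.single, diagonal] <;>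
      field_simp <;> ring
  · -- ⁅w4, w2⁆ = w2
    simp only [w2, w4, e13, hd, Ring.lie_def]
    ext i j
    fin_cases i <;> fin_cases j <;>
      simp [Matrix.mul_apply, Fin.sum_univ_succ, Matrix.single, diagonal] <;>
      field_simp <;> ring
  · -- ⁅w4, w3⁆ = w1
    simp only [w1, w3, w4, e12, e23, hd, Ring.lie_def]
    ext i j
    fin_cases i <;> fin_cases j <;>
      simp [Matrix.mul_apply, Fin.sum_univ_succ, Matrix.single, diagonal] <;>
      field_simp <;> ring
  · -- ⁅w3, w1⁆ = w2
    simp only [w1, w2, w3, e12, e23, e13, Ring.lie_def]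
    ext i j
    fin_cases i <;> fin_cases j <;>
      simp [Matrix.mul_apply, Fin.sum_univ_succ, Matrix.single] <;>
      field_simp <;> ring
  · -- ⁅w1, w2⁆ = 0
    simp only [w1, w2, e12, e23, e13, Ring.lie_def]
    ext i j
    fin_cases i <;> fin_cases j <;>
      simp [Matrix.mul_apply, Fin.sum_univ_succ, Matrix.single]
  · -- ⁅w3, w2⁆ = 0
    simp only [w2, w3, e12, e23, e13, Ring.lie_def]
    ext i j
    fin_cases i <;> fin_cases j <;>
      simp [Matrix.mul_apply, Fin.sum_univ_succ, Matrix.single]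
  · -- LinearIndependent
    rw [Fintype.linearIndependent_iff]
    intro g hg
    simp only [Fin.sum_univ_four, Matrix.cons_val_zero, Matrix.cons_val_one, Matrix.head_cons,
      Matrix.cons_val_two, Matrix.cons_val_three, Matrix.tail_cons] at hg
    have h := fun p q => congrFun (congrFun hg p) q
    have h22 := h 2 2
    have h02 := h 0 2
    have h01 := h 0 1
    have h12 := h 1 2
    simp [w1, w2, w3, w4, e12, e23, e13, hd, Matrix.single, diagonal] at h22 h02 h01 h12
    field_simp at h22 h02 h01 h12
    have hg3 : g 3 = 0 := h22.resolve_right hα1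
    have hg1 : g 1 = 0 := by
      rcases h02 with h | h | h
      · exact h
      · exact absurd (by linear_combination h) h1
      · exact absurd h hα1
    have hg0 : g 0 = 0 := by
      have h' := sub_eq_zero.2 (h01.trans h12.symm)
      have h'' : g 0 * (3*(α-1)) = 0 := by linear_combination h'
      rcases mul_eq_zero.1 h'' with h | h
      · exact h
      · exact absurd h hα3
    have hg2 : g 2 = 0 := by
      rw [hg0] at h01
      have h' : g 2 * (α + 1) = 0 := by linear_combination h01
      rcases mul_eq_zero.1 h' with h | h
      · exact h
      · exact absurd h hα1
    intro i; fin_cases i <;> assumption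
  · -- span equality
    apply le_antisymm <;> rw [Submodule.span_le] <;> rintro x (rfl | rfl | rfl | rfl)
    · exact Submodule.smul_mem _ _ (Submodule.sub_mem _
        (Submodule.smul_mem _ _ (Submodule.subset_span (by simp)))
        (Submodule.smul_mem _ _ (Submodule.subset_span (by simp))))
    · have h : w2 = (-(-(3*(α - 1)) / (α + 1))) • (-e13) := by
        rw [smul_neg, ← neg_smul, neg_neg]
      rw [h]
      exact Submodule.smul_mem _ _ (Submodule.subset_span (by simp))
    · exact Submodule.add_mem _ (Submodule.subset_span (by simp))
        (Submodule.subset_span (by simp))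
    · exact Submodule.smul_mem _ _ (Submodule.subset_span (by simp [d]))
    · have key : (3*(α-1)) • e12 = (α+1) • w1 + (α-2) • w3 := by
        simp only [w1, w3]
        ext i j
        fin_cases i <;> fin_cases j <;>
          simp [e12, e23, Matrix.single] <;> field_simp <;> ring
      have h : e12 = (3*(α-1))⁻¹ • ((α+1) • w1 + (α-2) • w3) := by
        rw [← key, smul_smul, inv_mul_cancel₀ hα3, one_smul]
      rw [h]
      exact Submodule.smul_mem _ _ (Submodule.add_mem _
        (Submodule.smul_mem _ _ (Submodule.subset_span (by simp)))
        (Submodule.smul_mem _ _ (Submodule.subset_span (by simp))))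
    · have key : (3*(α-1)) • e23 = (2*α-1) • w3 - (α+1) • w1 := by
        simp only [w1, w3]
        ext i j
        fin_cases i <;> fin_cases j <;>
          simp [e12, e23, Matrix.single] <;> field_simp <;> ring
      have h : e23 = (3*(α-1))⁻¹ • ((2*α-1) • w3 - (α+1) • w1) := by
        rw [← key, smul_smul, inv_mul_cancel₀ hα3, one_smul]
      rw [h]
      exact Submodule.smul_mem _ _ (Submodule.sub_mem _
        (Submodule.smul_mem _ _ (Submodule.subset_span (by simp)))
        (Submodule.smul_mem _ _ (Submodule.subset_span (by simp))))
    · have h : -e13 = ((α+1)/(3*(α-1))) • w2 := by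
        simp only [w2, smul_smul]
        rw [show (α+1)/(3*(α-1)) * (-(3*(α - 1)) / (α + 1)) = -1 by field_simp]
        simp
      rw [h]
      exact Submodule.smul_mem _ _ (Submodule.subset_span (by simp))
    · have h : d = (α+1) • w4 := by
        simp only [w4, ← hd, smul_smul, mul_inv_cancel₀ hα1, one_smul]
      rw [h]
      exact Submodule.smul_mem _ _ (Submodule.subset_span (by simp))
end
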